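/- arXiv:2311.05505 — 3 statements merged into one kernel-verified Lean document; each statement's English description precedes it below -/
import Mathlib

section
/- If G is a graph in the class 𝓗 with respect to a path P = uvz (so G is a 2-connected, k-regular graph on 2q+1 vertices for some q ≥ k, with the sets X, Y as in the definition of 𝓗), then no Hamiltonian cycle of G contains the path P. In particular, the bound 2k on the number of vertices in the statement 'every 2-connected, k-regular graph on at most 2k vertices has a Hamiltonian cycle through any 2-path P with {u,v,z} not a cut-set' is sharp. -/
/-!
A Hamiltonian cycle of `G` has exactly `2q + 1` edges. Each of the `q` vertices of
the independent set `Y` lies on two of them, and no edge of `G` joins two vertices of `Y`, so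
`2q` edges of the cycle meet `Y`. The two edges `uv` and `vz` of `P` lie inside `X`, so they
are two further edges of the cycle, one too many.
-/

open SimpleGraph

/-- A graph is `m`-connected if it has more than `m` vertices and deleting any set of
fewer than `m` vertices leaves a connected graph. -/
def IsKConnected {V : Type*} [Fintype V] (m : ℕ) (G : SimpleGraph V) : Prop :=
  m + 1 ≤ Fintype.card V ∧ ∀ S : Set V, Nat.card S < m → (G.induce Sᶜ).Connected

/-- `G` belongs to the class `𝓗` with respect to the path `P = uvz`:
for some positive integer `q ≥ k`, `G` is a `2`-connected, `k`-regular graph on `2q + 1`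
vertices containing two disjoint vertex sets `X` and `Y` such that `Y` is independent,
`{u, v, z} ⊆ X`, `|Y| = q`, `|X| = q + 1`, every neighbour of every vertex of `Y` lies
in `X`, and `v` is adjacent to `u` and `z`. -/
def InClassH {V : Type*} [Fintype V] (G : SimpleGraph V) [DecidableRel G.Adj]
    (k : ℕ) (u v z : V) : Prop :=
  ∃ q : ℕ, 1 ≤ q ∧ k ≤ q ∧ Fintype.card V = 2 * q + 1 ∧
    IsKConnected 2 G ∧ G.IsRegularOfDegree k ∧
    ∃ X Y : Set V, Disjoint X Y ∧
      (∀ a ∈ Y, ∀ b ∈ Y, ¬ G.Adj a b) ∧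
      u ∈ X ∧ v ∈ X ∧ z ∈ X ∧
      Nat.card Y = q ∧ Nat.card X = q + 1 ∧
      (∀ a ∈ Y, ∀ b : V, G.Adj a b → b ∈ X) ∧
      G.Adj v u ∧ G.Adj v z

open Finset

namespace SimpleGraph.Walk

variable {V : Type*} {G : SimpleGraph V} {a : V}

lemma IsCycle.one_lt_card_edges_mem [DecidableEq V] {c : G.Walk a a} (hc : c.IsCycle)
    {y : V} (hy : y ∈ c.support) : 1 < #{e ∈ c.edges.toFinset | y ∈ e} := by
  obtain ⟨w₁, w₂, hne, hN⟩ :=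
    Set.ncard_eq_two.mp (hc.ncard_neighborSet_toSubgraph_eq_two hy)
  have hmem : ∀ w ∈ ({w₁, w₂} : Set V), s(y, w) ∈ {e ∈ c.edges.toFinset | y ∈ e} := by
    intro w hw
    rw [← hN, Subgraph.mem_neighborSet, adj_toSubgraph_iff_mem_edges] at hw
    simpa using hw
  exact one_lt_card.mpr
    ⟨_, hmem w₁ (by simp), _, hmem w₂ (by simp), fun h ↦ hne (Sym2.congr_right.mp h)⟩

lemma IsCycle.two_mul_card_add_card_le_length [DecidableEq V] {c : G.Walk a a}
    (hc : c.IsCycle) {Y : Finset V} (hYind : G.IsIndepSet Y) (hYc : ∀ y ∈ Y, y ∈ c.support)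
    {F : Finset (Sym2 V)} (hF : ∀ e ∈ F, e ∈ c.edges ∧ ∀ y ∈ Y, y ∉ e) :
    2 * #Y + #F ≤ c.length := by
  set I : V → Finset (Sym2 V) := fun y ↦ {e ∈ c.edges.toFinset | y ∈ e}
  have hI : (Y : Set V).PairwiseDisjoint I := by
    intro y hy y' hy' hne
    refine Finset.disjoint_left.mpr fun e he he' ↦ ?_
    simp only [I, mem_filter, List.mem_toFinset] at he he'
    have hyy' : e = s(y, y') := Sym2.eq_of_ne_mem hne he.2 he'.2 (by simp) (by simp)
    exact hYind hy hy' hne (c.adj_of_mem_edges (hyy' ▸ he.1))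
  have hIF : Disjoint (Y.biUnion I) F := by
    refine Finset.disjoint_left.mpr fun e he heF ↦ ?_
    obtain ⟨y, hy, hye⟩ := mem_biUnion.mp he
    exact (hF e heF).2 y hy (mem_filter.mp hye).2
  have hsub : Y.biUnion I ∪ F ⊆ c.edges.toFinset := by
    refine union_subset (biUnion_subset.mpr fun y _ ↦ filter_subset _ _) fun e he ↦ ?_
    exact List.mem_toFinset.mpr (hF e he).1
  calc 2 * #Y + #F = ∑ y ∈ Y, 2 + #F := by rw [sum_const, smul_eq_mul, mul_comm]
    _ ≤ ∑ y ∈ Y, #(I y) + #F := by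
      gcongr with y hy
      exact hc.one_lt_card_edges_mem (hYc y hy)
    _ = #(Y.biUnion I ∪ F) := by rw [card_union_of_disjoint hIF, card_biUnion hI]
    _ ≤ #c.edges.toFinset := card_le_card hsub
    _ = c.length := by rw [List.toFinset_card_of_nodup hc.edges_nodup, length_edges]

end SimpleGraph.Walk

theorem statement7_general {V : Type*} [Fintype V] [DecidableEq V]
    (G : SimpleGraph V) [DecidableRel G.Adj] (k : ℕ)
    (u v z : V) (huz : u ≠ z)
    (hH : InClassH G k u v z) :
    ¬ ∃ (a : V) (c : G.Walk a a),
        c.IsHamiltonianCycle ∧ s(u, v) ∈ c.edges ∧ s(v, z) ∈ c.edges := by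
  rintro ⟨a, c, hc, huv, hvz⟩
  obtain ⟨q, -, -, hcard, -, -, X, Y, hXY, hYind, huX, hvX, hzX, hYcard, -, -, -, -⟩ := hH
  classical
  have hYq : #Y.toFinset = q := by
    rw [← Set.ncard_eq_toFinset_card', ← Nat.card_coe_set_eq, hYcard]
  have hYindep : G.IsIndepSet (Y.toFinset : Set V) := by
    rw [Set.coe_toFinset]
    exact fun x hx y hy _ ↦ hYind x hx y hy
  have hP : s(u, v) ≠ s(v, z) := by
    simpa [(c.adj_of_mem_edges huv).ne] using huz
  have hYX : ∀ x ∈ X, ∀ y ∈ Y, y ≠ x :=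
    fun x hx y hy h ↦ Set.disjoint_left.mp hXY (h ▸ hx) hy
  have hPY : ∀ e ∈ ({s(u, v), s(v, z)} : Finset (Sym2 V)),
      e ∈ c.edges ∧ ∀ y ∈ Y.toFinset, y ∉ e := by
    simp only [mem_insert, mem_singleton, forall_eq_or_imp, forall_eq, Set.mem_toFinset,
      Sym2.mem_iff, not_or]
    exact ⟨⟨huv, fun y hy ↦ ⟨hYX u huX y hy, hYX v hvX y hy⟩⟩,
      hvz, fun y hy ↦ ⟨hYX v hvX y hy, hYX z hzX y hy⟩⟩
  have := hc.isCycle.two_mul_card_add_card_le_length hYindep (fun y _ ↦ hc.mem_support y) hPY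
  rw [hYq, card_pair hP, hc.length_eq, hcard] at this
  omega

/-- **Sharpness of the bound `2k`.** If `G` belongs to the class `𝓗` with respect to a
2-path `P = uvz`, then no Hamiltonian cycle of `G` contains the path `P`. -/
theorem statement7 {V : Type*} [Fintype V] [DecidableEq V]
    (G : SimpleGraph V) [DecidableRel G.Adj] (k : ℕ)
    (u v z : V) (huv : G.Adj u v) (hvz : G.Adj v z) (huz : u ≠ z)
    (hH : InClassH G k u v z) :
    ¬ ∃ (a : V) (c : G.Walk a a),
        c.IsHamiltonianCycle ∧ s(u, v) ∈ c.edges ∧ s(v, z) ∈ c.edges :=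
  statement7_general G k u v z huz hH
end

section
/- For every k ≥ 3, let H₁ and H₂ be two disjoint copies of the graph obtained from the complete graph K_{k+1} by deleting one edge aᵢbᵢ (i = 1, 2), and let G be the graph obtained from H₁ ∪ H₂ by adding the edges a₁a₂ and b₁b₂. Then G is a 2-connected, k-regular graph on 2k+2 vertices, and there exists a path P = uvz of length 2 in G such that G - {u, v, z} is connected but no Hamiltonian cycle of G contains P. Hence the bound 2k+1 in Theorem 1.5 is sharp. -/
open SimpleGraph

/-- The graph obtained from two disjoint copies `H₁, H₂` of `K_{k+1}` minus an edge
`aᵢbᵢ` (here `aᵢ = (i, 0)` and `bᵢ = (i, 1)`) by adding the edges `a₁a₂` and `b₁b₂`. -/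
def sharpGraph (k : ℕ) : SimpleGraph (Fin 2 × Fin (k + 1)) :=
  SimpleGraph.fromRel (fun x y =>
    (x.1 = y.1 ∧ ¬(x.2.val ≤ 1 ∧ y.2.val ≤ 1)) ∨
    (x.1 ≠ y.1 ∧ x.2 = y.2 ∧ x.2.val ≤ 1))

noncomputable instance (k : ℕ) : DecidableRel (sharpGraph k).Adj :=
  Classical.decRel _

/-!
Inside `Hᵢ` every vertex other than `aᵢ, bᵢ` is adjacent to all of `Hᵢ`. So after deleting one
vertex, or the path `u a₁ z` below (then `b₁` takes this role in `H₁`), each side keeps a vertex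
adjacent to all its surviving vertices, and one of the edges `a₁a₂`, `b₁b₂` joining the sides
survives.

Take `P = u a₁ z` with `u, z ∈ H₁ \ {a₁, b₁}`. A Hamiltonian cycle through `P` already has the two
cycle edges `a₁u`, `a₁z` at `a₁`, so it avoids `a₁a₂`, and `b₁b₂` is the only edge left across the
cut `(H₁, H₂)`. A cycle visiting both sides crosses that cut a positive even number of times, but
it uses each edge at most once.
-/

namespace SimpleGraph.Walk

variable {V : Type*} {G : SimpleGraph V}

theorem even_countP_darts_ne_iff (f : V → Fin 2) {x y : V} (w : G.Walk x y) :
    Even (w.darts.countP fun d => f d.fst ≠ f d.snd) ↔ f x = f y := by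
  induction w with
  | nil => simp
  | @cons u v y h p ih =>
    rw [darts_cons, List.countP_cons]
    generalize f u = a, f v = b, f y = c at *
    fin_cases a <;> fin_cases b <;> fin_cases c <;> simp_all [Nat.even_add_one]

theorem exists_mem_darts_ne_of_mem_support {β : Type*} (f : V → β) {x y u : V}
    (w : G.Walk x y) (hu : u ∈ w.support) (hxu : f x ≠ f u) :
    ∃ d ∈ w.darts, f d.fst ≠ f d.snd := by
  induction w with
  | nil =>
    rw [support_nil, List.mem_singleton] at hu
    exact absurd (congrArg f hu.symm) hxu
  | @cons x v y h p ih =>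
    rw [support_cons, List.mem_cons] at hu
    rcases hu with rfl | hu
    · exact absurd rfl hxu
    by_cases hxv : f x = f v
    · obtain ⟨d, hd, hne⟩ := ih hu (hxv ▸ hxu)
      exact ⟨d, by simp [hd], hne⟩
    · exact ⟨⟨(x, v), h⟩, by simp, hxv⟩

theorem IsTrail.countP_darts_edge_eq_le_one [DecidableEq V] {x y : V} {w : G.Walk x y}
    (hw : w.IsTrail) (e : Sym2 V) : (w.darts.countP fun d => d.edge = e) ≤ 1 := by
  have := List.nodup_iff_count_le_one.mp hw.edges_nodup e
  rwa [edges, List.count, List.countP_map] at this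

theorem IsCycle.eq_or_eq_or_eq_of_mem_edges {a v x y z : V} {c : G.Walk a a} (hc : c.IsCycle)
    (hx : s(v, x) ∈ c.edges) (hy : s(v, y) ∈ c.edges) (hz : s(v, z) ∈ c.edges) :
    x = y ∨ x = z ∨ y = z := by
  by_contra! hne
  have htwo := hc.ncard_neighborSet_toSubgraph_eq_two (c.fst_mem_support_of_mem_edges hx)
  have hsub : ({x, y, z} : Set V) ⊆ c.toSubgraph.neighborSet v := by
    simp only [Set.insert_subset_iff, Set.singleton_subset_iff, Subgraph.mem_neighborSet,
      adj_toSubgraph_iff_mem_edges]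
    exact ⟨hx, hy, hz⟩
  have := Set.ncard_le_ncard hsub (Set.finite_of_ncard_ne_zero (by omega))
  rw [Set.ncard_eq_three.mpr ⟨x, y, z, hne.1, hne.2.1, hne.2.2, rfl⟩] at this
  omega

end SimpleGraph.Walk

open Finset

theorem Fin.card_filter_le_val (n m : ℕ) : #{t : Fin n | m ≤ t.val} = n - m := by
  have hsplit := card_filter_add_card_filter_not (s := univ) (p := fun t : Fin n => t.val < m)
  simp only [Fin.card_filter_val_lt, not_lt, card_univ, Fintype.card_fin] at hsplit
  omega

section sharpGraph

variable {k : ℕ}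

theorem sharpGraph_adj {x y : Fin 2 × Fin (k + 1)} :
    (sharpGraph k).Adj x y ↔
      (x.1 = y.1 ∧ x.2 ≠ y.2 ∧ (2 ≤ x.2.val ∨ 2 ≤ y.2.val)) ∨
      (x.1 ≠ y.1 ∧ x.2 = y.2 ∧ x.2.val ≤ 1) := by
  obtain ⟨i, j⟩ := x
  obtain ⟨i', j'⟩ := y
  simp only [sharpGraph, fromRel_adj, ne_eq, Prod.mk.injEq]
  grind

theorem sharpGraph_adj_of_two_le {i : Fin 2} {j j' : Fin (k + 1)} (hj : 2 ≤ j.val)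
    (hjj' : j ≠ j') : (sharpGraph k).Adj (i, j) (i, j') :=
  sharpGraph_adj.2 (Or.inl ⟨rfl, hjj', Or.inl hj⟩)

theorem sharpGraph_adj_of_fst_ne {i i' : Fin 2} {j : Fin (k + 1)} (hii' : i ≠ i')
    (hj : j.val ≤ 1) : (sharpGraph k).Adj (i, j) (i', j) :=
  sharpGraph_adj.2 (Or.inr ⟨hii', rfl, hj⟩)

theorem sharpGraph_edge_eq_of_adj_of_fst_ne {x y : Fin 2 × Fin (k + 1)}
    (hxy : (sharpGraph k).Adj x y) (hne : x.1 ≠ y.1) :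
    s(x, y) = s(((0 : Fin 2), x.2), ((1 : Fin 2), x.2)) ∧ x.2.val ≤ 1 := by
  obtain ⟨i, j⟩ := x
  obtain ⟨i', j'⟩ := y
  rcases sharpGraph_adj.1 hxy with ⟨h, -⟩ | ⟨-, rfl, hj⟩
  · exact absurd h hne
  refine ⟨?_, hj⟩
  fin_cases i <;> fin_cases i' <;> first | exact absurd rfl hne | simp [Sym2.eq_swap]

theorem sharpGraph_neighborFinset_of_two_le {i : Fin 2} {j : Fin (k + 1)} (hj : 2 ≤ j.val) :
    (sharpGraph k).neighborFinset (i, j) = ({i} : Finset (Fin 2)) ×ˢ {j}ᶜ := by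
  ext ⟨i', j'⟩
  simp only [mem_neighborFinset, sharpGraph_adj, mem_product, mem_singleton, mem_compl]
  grind

theorem sharpGraph_neighborFinset_of_le_one {i : Fin 2} {j : Fin (k + 1)} (hj : j.val ≤ 1) :
    (sharpGraph k).neighborFinset (i, j) =
      ({i}ᶜ : Finset (Fin 2)) ×ˢ {j} ∪ {i} ×ˢ ({t | 2 ≤ t.val} : Finset (Fin (k + 1))) := by
  ext ⟨i', j'⟩
  simp only [mem_neighborFinset, sharpGraph_adj, mem_union, mem_product, mem_singleton,
    mem_compl, mem_filter_univ]
  grind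

theorem sharpGraph_isRegularOfDegree (hk : 1 ≤ k) : (sharpGraph k).IsRegularOfDegree k := by
  rintro ⟨i, j⟩
  rw [← card_neighborFinset_eq_degree]
  rcases le_or_gt 2 j.val with hj | hj
  · rw [sharpGraph_neighborFinset_of_two_le hj, card_product, card_singleton, card_compl,
      card_singleton, Fintype.card_fin]
    omega
  · rw [sharpGraph_neighborFinset_of_le_one (by omega), card_union_of_disjoint, card_product,
      card_product, card_compl, card_singleton, card_singleton, Fin.card_filter_le_val]
    · simp only [Fintype.card_fin]
      omega
    · exact disjoint_product.2 (Or.inl disjoint_compl_left)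

theorem sharpGraph_induce_compl_connected {S : Set (Fin 2 × Fin (k + 1))}
    (hub : Fin 2 → Fin (k + 1)) (hub_notMem : ∀ i, (i, hub i) ∉ S)
    (hub_adj : ∀ x ∉ S, x.2 ≠ hub x.1 → (sharpGraph k).Adj (x.1, hub x.1) x)
    {t : Fin (k + 1)} (ht : t.val ≤ 1) (ht₀ : ((0 : Fin 2), t) ∉ S) (ht₁ : ((1 : Fin 2), t) ∉ S) :
    ((sharpGraph k).induce Sᶜ).Connected := by
  set H := (sharpGraph k).induce Sᶜ
  have reachable_hub (x) (hx : x ∉ S) :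
      H.Reachable ⟨(x.1, hub x.1), hub_notMem x.1⟩ ⟨x, hx⟩ := by
    obtain ⟨i, j⟩ := x
    by_cases hj : j = hub i
    · subst hj
      rfl
    · exact Adj.reachable (hub_adj _ hx hj)
  have reachable_side (i) (hi : (i, t) ∉ S) :
      H.Reachable ⟨((0 : Fin 2), t), ht₀⟩ ⟨(i, t), hi⟩ := by
    fin_cases i
    · rfl
    · exact Adj.reachable (sharpGraph_adj_of_fst_ne (by decide) ht)
  refine (connected_iff_exists_forall_reachable H).2 ⟨⟨((0 : Fin 2), t), ht₀⟩, ?_⟩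
  rintro ⟨⟨i, j⟩, hx⟩
  have hit : (i, t) ∉ S := by fin_cases i <;> assumption
  exact (reachable_side i hit).trans ((reachable_hub _ hit).symm.trans (reachable_hub _ hx))

theorem sharpGraph_isKConnected_two (hk : 3 ≤ k) : IsKConnected 2 (sharpGraph k) := by
  refine ⟨by simp only [Fintype.card_prod, Fintype.card_fin]; omega, fun S hS => ?_⟩
  have hS : S.Subsingleton :=
    Set.subsingleton_coe _ |>.1 (Finite.card_le_one_iff_subsingleton.1 (by omega))
  have notMem_of_ne {p q} (hp : p ∈ S) (hqp : q ≠ p) : q ∉ S := fun hq => hqp (hS hq hp)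
  have hub_exists (i : Fin 2) : ∃ j : Fin (k + 1), 2 ≤ j.val ∧ (i, j) ∉ S := by
    by_cases h : (i, (⟨2, by omega⟩ : Fin (k + 1))) ∈ S
    · exact ⟨⟨3, by omega⟩, by simp, notMem_of_ne h (by simp)⟩
    · exact ⟨_, le_rfl, h⟩
  choose hub two_le_hub hub_notMem using hub_exists
  obtain ⟨t, ht, ht₀, ht₁⟩ :
      ∃ t : Fin (k + 1), t.val ≤ 1 ∧ ((0 : Fin 2), t) ∉ S ∧ ((1 : Fin 2), t) ∉ S := by
    by_cases h : ((0 : Fin 2), (0 : Fin (k + 1))) ∉ S ∧ ((1 : Fin 2), (0 : Fin (k + 1))) ∉ S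
    · exact ⟨0, by simp, h⟩
    · obtain ⟨i, hi⟩ : ∃ i : Fin 2, (i, (0 : Fin (k + 1))) ∈ S := by
        by_contra! h'
        exact h ⟨h' 0, h' 1⟩
      exact ⟨⟨1, by omega⟩, le_rfl, notMem_of_ne hi (by simp [Fin.ext_iff]),
        notMem_of_ne hi (by simp [Fin.ext_iff])⟩
  exact sharpGraph_induce_compl_connected hub hub_notMem
    (fun x _ hx => sharpGraph_adj_of_two_le (two_le_hub x.1) hx.symm) ht ht₀ ht₁

theorem sharpGraph_induce_compl_connected_of_two_le {j j' : Fin (k + 1)} (hj : 2 ≤ j.val)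
    (hj' : 2 ≤ j'.val) :
    ((sharpGraph k).induce ({((0 : Fin 2), j), ((0 : Fin 2), 0), ((0 : Fin 2), j')} :
      Set (Fin 2 × Fin (k + 1)))ᶜ).Connected := by
  have hb : ((0 : Fin 2), (⟨1, by omega⟩ : Fin (k + 1))) ∉
      ({((0 : Fin 2), j), ((0 : Fin 2), 0), ((0 : Fin 2), j')} : Set (Fin 2 × Fin (k + 1))) := by
    simp only [Set.mem_insert_iff, Set.mem_singleton_iff, Prod.mk.injEq, true_and, Fin.ext_iff,
      Fin.val_zero]
    omega
  refine sharpGraph_induce_compl_connected ![⟨1, by omega⟩, ⟨2, by omega⟩] ?_ ?_ le_rfl hb ?_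
  · exact Fin.forall_fin_two.2 ⟨hb, by simp⟩
  · rintro ⟨i, x⟩ hx hne
    obtain rfl | rfl : i = 0 ∨ i = 1 := by fin_cases i <;> simp
    · simp only [Set.mem_insert_iff, Set.mem_singleton_iff, Prod.mk.injEq, true_and, ne_eq,
        Fin.ext_iff, Fin.val_zero, Matrix.cons_val_zero] at hx hne
      exact (sharpGraph_adj_of_two_le (by omega) (Fin.ne_of_val_ne hne)).symm
    · exact sharpGraph_adj_of_two_le le_rfl (Ne.symm hne)
  · simp

theorem sharpGraph_notMem_edges_of_isHamiltonianCycle {j j' : Fin (k + 1)} (hjj' : j ≠ j')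
    {a : Fin 2 × Fin (k + 1)} {c : (sharpGraph k).Walk a a} (hc : c.IsHamiltonianCycle)
    (hu : s(((0 : Fin 2), j), ((0 : Fin 2), 0)) ∈ c.edges) :
    s(((0 : Fin 2), 0), ((0 : Fin 2), j')) ∉ c.edges := by
  intro hz
  have ha : s(((0 : Fin 2), (0 : Fin (k + 1))), ((1 : Fin 2), 0)) ∉ c.edges := fun ha => by
    rw [Sym2.eq_swap] at hu
    rcases hc.isCycle.eq_or_eq_or_eq_of_mem_edges hu hz ha with h | h | h <;>
      simp_all [Prod.ext_iff]
  have hcross (d) (hd : d ∈ c.darts) (hne : d.fst.1 ≠ d.snd.1) :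
      d.edge = s(((0 : Fin 2), d.fst.2), ((1 : Fin 2), d.fst.2)) ∧ d.fst.2.val = 1 := by
    obtain ⟨hedge, hle⟩ := sharpGraph_edge_eq_of_adj_of_fst_ne d.adj hne
    refine ⟨hedge, le_antisymm hle (Nat.one_le_iff_ne_zero.2 fun h0 => ha ?_)⟩
    rw [← Fin.val_eq_zero_iff.1 h0, ← hedge]
    exact List.mem_map_of_mem hd
  obtain ⟨i, hi⟩ := exists_ne a.1
  obtain ⟨d₀, hd₀, hne₀⟩ :=
    c.exists_mem_darts_ne_of_mem_support Prod.fst (hc.mem_support (i, 0)) hi.symm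
  have hpos : 0 < c.darts.countP fun d => d.fst.1 ≠ d.snd.1 :=
    List.countP_pos_iff.2 ⟨d₀, hd₀, decide_eq_true hne₀⟩
  have hle : (c.darts.countP fun d => d.fst.1 ≠ d.snd.1) ≤ 1 := by
    refine (List.countP_mono_left fun d hd hne => ?_).trans
      (hc.isCycle.isTrail.countP_darts_edge_eq_le_one d₀.edge)
    obtain ⟨hedge, hb⟩ := hcross d hd (of_decide_eq_true hne)
    obtain ⟨hedge₀, hb₀⟩ := hcross d₀ hd₀ hne₀
    rw [decide_eq_true_eq, hedge, hedge₀, Fin.ext (hb.trans hb₀.symm)]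
  obtain ⟨m, hm⟩ := (c.even_countP_darts_ne_iff Prod.fst).2 rfl
  omega

end sharpGraph

/-- **Sharpness of the bound `2k + 1`.** For every `k ≥ 3` the graph built from two
copies of `K_{k+1}` minus an edge by joining them with the edges `a₁a₂` and `b₁b₂` is a
`2`-connected, `k`-regular graph on `2k + 2` vertices that has a 2-path `P = uvz` with
`G - {u, v, z}` connected which is contained in no Hamiltonian cycle of `G`. -/
theorem statement8 (k : ℕ) (hk : 3 ≤ k) :
    IsKConnected 2 (sharpGraph k) ∧
    (sharpGraph k).IsRegularOfDegree k ∧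
    Fintype.card (Fin 2 × Fin (k + 1)) = 2 * k + 2 ∧
    ∃ u v z : Fin 2 × Fin (k + 1),
      (sharpGraph k).Adj u v ∧ (sharpGraph k).Adj v z ∧ u ≠ z ∧
      ((sharpGraph k).induce ({u, v, z} : Set (Fin 2 × Fin (k + 1)))ᶜ).Connected ∧
      ¬ ∃ (a : Fin 2 × Fin (k + 1)) (c : (sharpGraph k).Walk a a),
          c.IsHamiltonianCycle ∧ s(u, v) ∈ c.edges ∧ s(v, z) ∈ c.edges := by
  refine ⟨sharpGraph_isKConnected_two hk, sharpGraph_isRegularOfDegree (by omega),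
    by simp only [Fintype.card_prod, Fintype.card_fin]; ring, ?_⟩
  have hj : 2 ≤ (⟨2, by omega⟩ : Fin (k + 1)).val := le_rfl
  have hj' : 2 ≤ (⟨3, by omega⟩ : Fin (k + 1)).val := by simp
  have hjj' : (⟨2, by omega⟩ : Fin (k + 1)) ≠ ⟨3, by omega⟩ := by simp
  refine ⟨(0, ⟨2, by omega⟩), (0, 0), (0, ⟨3, by omega⟩), sharpGraph_adj_of_two_le hj (by simp),
    (sharpGraph_adj_of_two_le hj' (by simp)).symm, by simp,
    sharpGraph_induce_compl_connected_of_two_le hj hj', ?_⟩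
  rintro ⟨a, c, hc, hu, hz⟩
  exact sharpGraph_notMem_edges_of_isHamiltonianCycle hjj' hc hu hz
end

section
/- Let G be a connected graph, let P = uvz be a path of G, and let G₁ be the graph obtained from G by deleting the edges uv and vz and adding two new vertices w₁ and w₂ together with the edges uw₁, w₁v, vw₂, w₂z. Then G has a Hamiltonian cycle containing the path P if and only if G₁ has a Hamiltonian cycle. -/
open SimpleGraph

/-- The graph `G₁` obtained from `G` by deleting the edges `uv` and `vz` of the path
`P = uvz` and adding two new vertices `w₁ = Sum.inr 0` and `w₂ = Sum.inr 1` together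
with the edges `uw₁`, `w₁v`, `vw₂`, `w₂z` (i.e. subdividing each edge of `P` once). -/
def subdividePath {V : Type*} [DecidableEq V] (G : SimpleGraph V) (u v z : V) :
    SimpleGraph (V ⊕ Fin 2) :=
  SimpleGraph.fromRel (fun x y =>
    (∃ a b : V, x = Sum.inl a ∧ y = Sum.inl b ∧ G.Adj a b ∧
        s(a, b) ≠ s(u, v) ∧ s(a, b) ≠ s(v, z)) ∨
    (x = Sum.inl u ∧ y = Sum.inr 0) ∨ (x = Sum.inl v ∧ y = Sum.inr 0) ∨
    (x = Sum.inl v ∧ y = Sum.inr 1) ∨ (x = Sum.inl z ∧ y = Sum.inr 1))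

/-!
Both sides are equivalent to the existence of a Hamiltonian path of `G - v` from `z` to `u`.
Cutting a Hamiltonian cycle open at a vertex `a` leaves a path through all other vertices between
two distinct neighbours of `a`, and conversely such a path closes up through `a`. In `G`, cutting
at `v` a cycle that uses `uv` and `vz` leaves a `z`–`u` path. In `G₁`, cutting at `w₁` (whose only
neighbours are `u` and `v`) leaves a path from `v` to `u`; the vertex `w₂` is interior to it and
its only neighbours are `v` and `z`, so the path begins `v w₂ z` and the rest is a `z`–`u` path
of `G - v`.
-/

namespace SimpleGraph.Walk

variable {V : Type*} {G : SimpleGraph V} {a x y : V}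

def IsHamiltonianExcept (p : G.Walk x y) (a : V) : Prop :=
  p.support.Nodup ∧ ∀ t, t ∈ p.support ↔ t ≠ a

lemma IsHamiltonianExcept.reverse {p : G.Walk x y} (hp : p.IsHamiltonianExcept a) :
    p.reverse.IsHamiltonianExcept a := by
  simpa [IsHamiltonianExcept] using hp

lemma IsHamiltonianExcept.notMem_support {p : G.Walk x y} (hp : p.IsHamiltonianExcept a) :
    a ∉ p.support :=
  fun h => (hp.2 a).mp h rfl

lemma mem_edges_cons_concat_iff (hx : G.Adj a x) (hy : G.Adj y a) {p : G.Walk x y}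
    (ha : a ∉ p.support) {t : V} :
    s(t, a) ∈ (cons hx (p.concat hy)).edges ↔ t = x ∨ t = y := by
  have : s(t, a) ∉ p.edges := fun h => ha (p.snd_mem_support_of_mem_edges h)
  simp only [edges_cons, edges_concat, List.concat_eq_append, List.mem_cons, List.mem_append,
    this, Sym2.eq_iff, false_or]
  grind [Adj.ne]

lemma IsPath.snd_eq_of_neighborSet_subset {p : G.Walk x y} (hp : p.IsPath) {w t : V}
    (hw : w ∈ p.support) (hwx : w ≠ x) (hwy : w ≠ y) (hN : G.neighborSet w ⊆ {x, t}) :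
    p.snd = w := by
  obtain ⟨i, rfl, hi⟩ := p.mem_support_iff_exists_getVert.mp hw
  have hi0 : i ≠ 0 := by rintro rfl; simp at hwx
  have hil : i < p.length := lt_of_le_of_ne hi (by rintro rfl; simp at hwy)
  have hsub : p.toSubgraph.neighborSet (p.getVert i) ⊆ {x, t} :=
    (p.toSubgraph.neighborSet_subset _).trans hN
  have heq := Set.eq_of_subset_of_ncard_le hsub
    (by rw [hp.ncard_neighborSet_toSubgraph_internal_eq_two hi0 hil]
        exact (Set.ncard_insert_le _ _).trans (by simp)) (Set.toFinite _)
  have hx : x ∈ p.toSubgraph.neighborSet (p.getVert i) := heq ▸ Set.mem_insert x {t}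
  exact hp.snd_of_toSubgraph_adj hx.symm

lemma exists_comap_support_map_eq {W : Type*} {H : SimpleGraph W} {f : V → W}
    (hf : Function.Injective f) {a b : V} (q : H.Walk (f a) (f b))
    (hq : ∀ t ∈ q.support, t ∈ Set.range f) :
    ∃ p : (H.comap f).Walk a b, p.support.map f = q.support := by
  suffices ∀ {x y : W} (q : H.Walk x y), (∀ t ∈ q.support, t ∈ Set.range f) →
      ∀ {a b : V}, f a = x → f b = y → ∃ p : (H.comap f).Walk a b, p.support.map f = q.support from
    this q hq rfl rfl
  intro x y q
  induction q with
  | nil => rintro - a b rfl hb; cases hf hb; exact ⟨nil, rfl⟩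
  | cons h q ih =>
    rintro hq a b rfl rfl
    obtain ⟨c, rfl⟩ := hq _ (List.mem_cons_of_mem _ q.start_mem_support)
    obtain ⟨p, hp⟩ := ih (fun t ht => hq t (List.mem_cons_of_mem _ ht)) rfl rfl
    exact ⟨cons (comap_adj.mpr h) p, by simp [hp]⟩

variable [DecidableEq V]

lemma isHamiltonian_concat_iff {p : G.Walk x y} (hy : G.Adj y a) :
    (p.concat hy).IsHamiltonian ↔ p.IsHamiltonianExcept a := by
  have hH : (p.concat hy).IsHamiltonian ↔
      (p.concat hy).support.Nodup ∧ ∀ t, t ∈ (p.concat hy).support :=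
    ⟨fun h => ⟨h.isPath.support_nodup, h.mem_support⟩,
      fun h => (IsPath.mk' h.1).isHamiltonian_of_mem h.2⟩
  rw [hH, support_concat, List.nodup_append, IsHamiltonianExcept]
  simp only [List.nodup_singleton, List.mem_singleton, List.mem_append, true_and, ne_eq]
  grind

lemma isHamiltonianCycle_cons_concat_iff (hx : G.Adj a x) (hy : G.Adj y a) (p : G.Walk x y)
    (hxy : x ≠ y) : (cons hx (p.concat hy)).IsHamiltonianCycle ↔ p.IsHamiltonianExcept a := by
  rw [isHamiltonianCycle_iff_isCycle_and_support_count_tail_eq_one, support_cons, List.tail_cons]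
  change _ ∧ (p.concat hy).IsHamiltonian ↔ _
  rw [isHamiltonian_concat_iff]
  refine ⟨And.right, fun hp => ⟨?_, hp⟩⟩
  rw [cons_isCycle_iff, edges_concat, List.concat_eq_append]
  refine ⟨((isHamiltonian_concat_iff hy).mpr hp).isPath, fun he => ?_⟩
  rcases List.mem_append.mp he with he | he
  · exact hp.notMem_support (p.fst_mem_support_of_mem_edges he)
  · simp only [List.mem_cons, List.not_mem_nil, or_false, Sym2.eq_iff] at he
    grind [Adj.ne]

lemma IsHamiltonianCycle.exists_eq_cons_concat {c : G.Walk a a} (hc : c.IsHamiltonianCycle) :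
    ∃ (x y : V) (hx : G.Adj a x) (hy : G.Adj y a) (p : G.Walk x y),
      x ≠ y ∧ p.IsHamiltonianExcept a ∧ c = cons hx (p.concat hy) := by
  cases c with
  | nil => exact absurd Nil.nil hc.isCycle.not_nil
  | @cons _ x _ hx q =>
    have hq : ¬ q.Nil := fun h => hx.ne h.eq.symm
    have hxy : x ≠ q.penultimate := by
      simpa [penultimate_cons_of_not_nil _ _ hq] using hc.isCycle.snd_ne_penultimate
    rw [← concat_dropLast (adj_penultimate hq)] at hc ⊢
    exact ⟨_, _, hx, _, q.dropLast, hxy,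
      (isHamiltonianCycle_cons_concat_iff hx (adj_penultimate hq) q.dropLast hxy).mp hc, rfl⟩

end SimpleGraph.Walk

namespace SimpleGraph

open Walk

variable {V : Type*} [DecidableEq V] {G : SimpleGraph V} {u v z : V}

theorem exists_isHamiltonianCycle_mem_edges_iff (huv : G.Adj u v) (hvz : G.Adj v z)
    (huz : u ≠ z) :
    (∃ (a : V) (c : G.Walk a a),
        c.IsHamiltonianCycle ∧ s(u, v) ∈ c.edges ∧ s(v, z) ∈ c.edges) ↔
      ∃ p : G.Walk z u, p.IsHamiltonianExcept v := by
  constructor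
  · rintro ⟨a, c, hc, hu, hz⟩
    have hv := hc.mem_support v
    obtain ⟨x, y, hx, hy, p, hxy, hp, hcp⟩ := (hc.rotate hv).exists_eq_cons_concat
    have hmem : ∀ t, s(t, v) ∈ c.edges → t = x ∨ t = y := fun t ht => by
      rw [← mem_edges_cons_concat_iff hx hy hp.notMem_support, ← hcp]
      exact (rotate_edges c v hv).perm.mem_iff.mpr ht
    rcases hmem u hu with rfl | rfl <;> rcases hmem z (Sym2.eq_swap ▸ hz) with rfl | rfl
    · exact absurd rfl huz
    · exact ⟨p.reverse, hp.reverse⟩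
    · exact ⟨p, hp⟩
    · exact absurd rfl huz
  · rintro ⟨p, hp⟩
    refine ⟨v, cons hvz (p.concat huv),
      (isHamiltonianCycle_cons_concat_iff _ _ _ huz.symm).mpr hp, ?_, ?_⟩
    · exact (mem_edges_cons_concat_iff hvz huv hp.notMem_support).mpr (.inr rfl)
    · rw [Sym2.eq_swap]
      exact (mem_edges_cons_concat_iff hvz huv hp.notMem_support).mpr (.inl rfl)

end SimpleGraph

section subdividePath

open Walk

variable {V : Type*} [DecidableEq V] {G : SimpleGraph V} {u v z : V}

@[simp]
lemma subdividePath_adj_inl_inl {a b : V} :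
    (subdividePath G u v z).Adj (.inl a) (.inl b) ↔
      G.Adj a b ∧ s(a, b) ≠ s(u, v) ∧ s(a, b) ≠ s(v, z) := by
  simp only [subdividePath, fromRel_adj]
  grind [Adj.symm, Adj.ne]

lemma subdividePath_adj_inr_zero {x : V ⊕ Fin 2} :
    (subdividePath G u v z).Adj (.inr 0) x ↔ x = .inl u ∨ x = .inl v := by
  simp only [subdividePath, fromRel_adj]
  grind

lemma subdividePath_adj_inr_one {x : V ⊕ Fin 2} :
    (subdividePath G u v z).Adj (.inr 1) x ↔ x = .inl v ∨ x = .inl z := by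
  simp only [subdividePath, fromRel_adj]
  grind

lemma exists_subdividePath_walk_of_notMem_support {a b : V} (p : G.Walk a b) (hv : v ∉ p.support) :
    ∃ q : (subdividePath G u v z).Walk (.inl a) (.inl b), q.support = p.support.map .inl := by
  have hp : ∀ e ∈ p.edges, e ∈ ((subdividePath G u v z).comap Sum.inl).edgeSet := by
    intro e he
    induction e using Sym2.ind with
    | _ c d =>
      have hc : c ≠ v := fun h => hv (h ▸ p.fst_mem_support_of_mem_edges he)
      have hd : d ≠ v := fun h => hv (h ▸ p.snd_mem_support_of_mem_edges he)
      simp [p.adj_of_mem_edges he, hc, hd]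
  exact ⟨(p.transfer _ hp).map (Hom.comap _ _),
    (Walk.support_map _ _).trans (by rw [support_transfer]; rfl)⟩

lemma exists_walk_of_subdividePath_walk {a b : V}
    (q : (subdividePath G u v z).Walk (.inl a) (.inl b))
    (hq : ∀ t ∈ q.support, t ∈ Set.range Sum.inl) :
    ∃ p : G.Walk a b, p.support.map .inl = q.support := by
  obtain ⟨p, hp⟩ := exists_comap_support_map_eq Sum.inl_injective q hq
  exact ⟨p.mapLe fun _ _ h => (subdividePath_adj_inl_inl.mp h).1, by rwa [support_mapLe_eq_support]⟩

lemma exists_isHamiltonianExcept_of_subdividePath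
    {N : (subdividePath G u v z).Walk (.inl v) (.inl u)} (hN : N.IsHamiltonianExcept (.inr 0)) :
    ∃ p : G.Walk z u, p.IsHamiltonianExcept v := by
  have hsnd : N.snd = .inr 1 := (IsPath.mk' hN.1).snd_eq_of_neighborSet_subset (t := .inl z)
    ((hN.2 _).mpr (by simp)) (by simp) (by simp)
    fun x hx => by simpa using subdividePath_adj_inr_one.mp hx
  cases N with
  | nil => simp at hsnd
  | cons h N₁ =>
    rw [snd_cons] at hsnd
    subst hsnd
    cases N₁ with
    | cons h' N₂ =>
      obtain ⟨hnd, hmem⟩ := hN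
      simp only [support_cons, List.nodup_cons, List.mem_cons] at hnd hmem
      rcases subdividePath_adj_inr_one.mp h' with rfl | rfl
      · exact absurd (.inr N₂.start_mem_support) hnd.1
      · obtain ⟨p, hp⟩ := exists_walk_of_subdividePath_walk N₂ fun t ht => by
          rcases t with t | i
          · exact ⟨t, rfl⟩
          · fin_cases i
            · exact absurd (.inr (.inr ht)) ((hmem _).not.mpr (by simp))
            · exact absurd ht hnd.2.1
        refine ⟨p, (List.nodup_map_iff Sum.inl_injective).mp (hp ▸ hnd.2.2), fun t => ?_⟩
        have := hmem (.inl t)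
        rw [← List.mem_map_of_injective Sum.inl_injective, hp]
        grind

lemma subdividePath_exists_isHamiltonianCycle_iff :
    (∃ (a : V ⊕ Fin 2) (c : (subdividePath G u v z).Walk a a), c.IsHamiltonianCycle) ↔
      ∃ p : G.Walk z u, p.IsHamiltonianExcept v := by
  constructor
  · rintro ⟨a, c, hc⟩
    obtain ⟨x, y, hx, hy, N, hxy, hN, -⟩ :=
      (hc.rotate (hc.mem_support (.inr 0))).exists_eq_cons_concat
    rcases subdividePath_adj_inr_zero.mp hx with rfl | rfl <;>
      rcases subdividePath_adj_inr_zero.mp hy.symm with rfl | rfl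
    · exact absurd rfl hxy
    · exact exists_isHamiltonianExcept_of_subdividePath hN.reverse
    · exact exists_isHamiltonianExcept_of_subdividePath hN
    · exact absurd rfl hxy
  · rintro ⟨p, hp⟩
    obtain ⟨q, hq⟩ :=
      exists_subdividePath_walk_of_notMem_support (u := u) (z := z) p hp.notMem_support
    let N := cons (subdividePath_adj_inr_one.mpr (.inr rfl))
      (q.concat (subdividePath_adj_inr_zero.mpr (.inl rfl)).symm)
    have hN : N.IsHamiltonianExcept (.inl v) := by
      refine ⟨by simpa [N, hq, List.nodup_append, List.nodup_map_iff Sum.inl_injective] using hp.1,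
        ?_⟩
      rintro (t | i)
      · simpa [N, hq] using hp.2 t
      · fin_cases i <;> simp [N, hq]
    exact ⟨_, _, (isHamiltonianCycle_cons_concat_iff
      (subdividePath_adj_inr_one.mpr (.inl rfl)).symm (subdividePath_adj_inr_zero.mpr (.inr rfl))
      N (by simp)).mpr hN⟩

end subdividePath

theorem statement16_general {V : Type*} [DecidableEq V]
    (G : SimpleGraph V)
    (u v z : V) (huv : G.Adj u v) (hvz : G.Adj v z) (huz : u ≠ z) :
    (∃ (a : V) (c : G.Walk a a),
        c.IsHamiltonianCycle ∧ s(u, v) ∈ c.edges ∧ s(v, z) ∈ c.edges) ↔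
    (∃ (a : V ⊕ Fin 2) (c : (subdividePath G u v z).Walk a a), c.IsHamiltonianCycle) :=
  (exists_isHamiltonianCycle_mem_edges_iff huv hvz huz).trans
    subdividePath_exists_isHamiltonianCycle_iff.symm

/-- **The subdivision operation.** Let `G` be a connected graph, `P = uvz` a path of `G`,
and let `G₁` be obtained from `G` by subdividing the edges `uv` and `vz` with new
vertices `w₁` and `w₂`.  Then `G` has a Hamiltonian cycle containing `P` if and only if
`G₁` is Hamiltonian. -/
theorem statement16 {V : Type*} [Fintype V] [DecidableEq V]
    (G : SimpleGraph V) (hconn : G.Connected)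
    (u v z : V) (huv : G.Adj u v) (hvz : G.Adj v z) (huz : u ≠ z) :
    (∃ (a : V) (c : G.Walk a a),
        c.IsHamiltonianCycle ∧ s(u, v) ∈ c.edges ∧ s(v, z) ∈ c.edges) ↔
    (∃ (a : V ⊕ Fin 2) (c : (subdividePath G u v z).Walk a a), c.IsHamiltonianCycle) :=
  statement16_general G u v z huv hvz huz
end
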